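/- Let 0 < k < n be integers, let κ_1 < κ_2 < ⋯ < κ_n be real numbers, and let A be a real k×n matrix of rank k that is totally nonnegative. Then the multiline-soliton function u(x,y,t) = 2 ∂_x² log τ(x,y,t) is bounded on ℝ³: there is a constant C such that |u(x,y,t)| ≤ C for all real (x,y,t). -/

import Mathlib

/-! Regroup `τ = Σ_I c_I exp (θ_I x + γ_I)` with `c_I = Δ_I(A) · ∏_{a<b} (κ_{i_b} - κ_{i_a}) ≥ 0`,
`θ_I = Σ_{i ∈ I} κ_i`, and `γ_I` independent of `x`; full rank makes some `c_I` positive, so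
`τ > 0`. Then `∂_x² log τ` is the variance of `θ_I` under the probability weights
`c_I exp (θ_I x + γ_I) / τ`, which lies in `[0, (Σ_i |κ_i|)²]` whatever `(x, y, t)` is. -/

open scoped BigOperators

/-- The maximal minor `Δ_I(A)` of a real `k × n` matrix `A` on the column set `I`
(columns taken in increasing order); junk value `0` if `I` does not have `k` elements. -/
noncomputable def kpMinor (k n : ℕ) (A : Matrix (Fin k) (Fin n) ℝ) (I : Finset (Fin n)) : ℝ :=
  if h : I.card = k then (A.submatrix id fun a => I.orderEmbOfFin h a).det else 0

/-- `A` is totally nonnegative: all maximal minors are nonnegative. -/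
def TotallyNonneg (k n : ℕ) (A : Matrix (Fin k) (Fin n) ℝ) : Prop :=
  ∀ I : Finset (Fin n), I.card = k → 0 ≤ kpMinor k n A I

/-- The Vandermonde factor `∏_{a<b} (κ_{i_b} - κ_{i_a})` attached to a `k`-element
column set `I = {i_1 < ⋯ < i_k}`. -/
noncomputable def kpVdm (k n : ℕ) (κ : Fin n → ℝ) (I : Finset (Fin n)) : ℝ :=
  if h : I.card = k then
    ∏ p ∈ Finset.univ.filter fun p : Fin k × Fin k => p.1 < p.2,
      (κ (I.orderEmbOfFin h p.2) - κ (I.orderEmbOfFin h p.1))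
  else 0

/-- The KP-II tau function of the data `(κ, A)`:
`τ(x,y,t) = Σ_I Δ_I(A) ∏_{a<b}(κ_{i_b}-κ_{i_a}) exp(Σ_{i∈I} (κ_i x + κ_i² y + κ_i³ t))`. -/
noncomputable def kpTau (k n : ℕ) (κ : Fin n → ℝ) (A : Matrix (Fin k) (Fin n) ℝ)
    (x y t : ℝ) : ℝ :=
  ∑ I ∈ Finset.powersetCard k (Finset.univ : Finset (Fin n)),
    kpMinor k n A I * kpVdm k n κ I *
      Real.exp (∑ i ∈ I, (κ i * x + κ i ^ 2 * y + κ i ^ 3 * t))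

/-- The multiline-soliton function `u(x,y,t) = 2 ∂_x² log τ(x,y,t)` of the data `(κ, A)`. -/
noncomputable def kpU (k n : ℕ) (κ : Fin n → ℝ) (A : Matrix (Fin k) (Fin n) ℝ)
    (x y t : ℝ) : ℝ :=
  2 * iteratedDeriv 2 (fun x' => Real.log (kpTau k n κ A x' y t)) x

open Finset Real

theorem exists_finset_linearIndepOn_card_eq_finrank_span {K V ι : Type*} [DivisionRing K]
    [AddCommGroup V] [Module K V] [Fintype ι] (v : ι → V) :
    ∃ I : Finset ι, LinearIndepOn K v (I : Set ι) ∧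
      I.card = Module.finrank K (Submodule.span K (Set.range v)) := by
  classical
  obtain ⟨b, -, -, hspan, hli⟩ :=
    exists_linearIndepOn_extension (linearIndepOn_empty K v) (Set.empty_subset Set.univ)
  have hspan' : Submodule.span K (v '' b) = Submodule.span K (Set.range v) :=
    le_antisymm (Submodule.span_mono (Set.image_subset_range v b))
      (Submodule.span_le.2 (by simpa using hspan))
  refine ⟨b.toFinset, by simpa using hli, ?_⟩
  rw [← hspan', Set.image_eq_range, finrank_span_eq_card hli, Set.toFinset_card]

lemma kpMinor_ne_zero_of_linearIndepOn {k n : ℕ} {A : Matrix (Fin k) (Fin n) ℝ}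
    {I : Finset (Fin n)} (hI : I.card = k) (hA : LinearIndepOn ℝ A.col (I : Set (Fin n))) :
    kpMinor k n A I ≠ 0 := by
  have hcols : LinearIndependent ℝ (A.col ∘ I.orderEmbOfFin hI) :=
    (linearIndepOn_range_iff (I.orderEmbOfFin hI).injective _).1
      (by rwa [range_orderEmbOfFin])
  rw [kpMinor, dif_pos hI, ← isUnit_iff_ne_zero, ← Matrix.isUnit_iff_isUnit_det,
    ← Matrix.linearIndependent_cols_iff_isUnit]
  exact hcols

lemma exists_kpMinor_ne_zero_of_rank_eq {k n : ℕ} {A : Matrix (Fin k) (Fin n) ℝ}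
    (hA : A.rank = k) : ∃ I : Finset (Fin n), I.card = k ∧ kpMinor k n A I ≠ 0 := by
  obtain ⟨I, hli, hcard⟩ := exists_finset_linearIndepOn_card_eq_finrank_span (K := ℝ) A.col
  rw [← Matrix.rank_eq_finrank_span_cols, hA] at hcard
  exact ⟨I, hcard, kpMinor_ne_zero_of_linearIndepOn hcard hli⟩

lemma kpVdm_pos {k n : ℕ} {κ : Fin n → ℝ} (hκ : StrictMono κ) {I : Finset (Fin n)}
    (hI : I.card = k) : 0 < kpVdm k n κ I := by
  rw [kpVdm, dif_pos hI]
  refine prod_pos fun p hp => sub_pos.2 <| hκ <| (I.orderEmbOfFin hI).strictMono ?_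
  exact (mem_filter.1 hp).2

section ExpSum

variable {ι : Type*} (s : Finset ι) (c θ γ : ι → ℝ)

noncomputable def expMoment (m : ℕ) (u : ℝ) : ℝ :=
  ∑ i ∈ s, c i * θ i ^ m * exp (θ i * u + γ i)

lemma hasDerivAt_expMoment (m : ℕ) (u : ℝ) :
    HasDerivAt (expMoment s c θ γ m) (expMoment s c θ γ (m + 1) u) u := by
  refine HasDerivAt.fun_sum fun i _ => ?_
  have hlin : HasDerivAt (fun v => θ i * v + γ i) (θ i) u := by
    simpa using ((hasDerivAt_id u).const_mul (θ i)).add_const (γ i)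
  exact (hlin.exp.const_mul (c i * θ i ^ m)).congr_deriv (by ring)

variable {s c θ γ}

lemma expMoment_zero_pos (hc : ∀ i ∈ s, 0 ≤ c i) (hpos : ∃ i ∈ s, 0 < c i) (u : ℝ) :
    0 < expMoment s c θ γ 0 u := by
  obtain ⟨i₀, hi₀, hci₀⟩ := hpos
  exact sum_pos' (fun i hi => by have := hc i hi; positivity) ⟨i₀, hi₀, by positivity⟩

lemma expMoment_two_nonneg (hc : ∀ i ∈ s, 0 ≤ c i) (u : ℝ) : 0 ≤ expMoment s c θ γ 2 u :=
  sum_nonneg fun i hi => by have := hc i hi; positivity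

lemma abs_expMoment_le {M : ℝ} (hc : ∀ i ∈ s, 0 ≤ c i) (hθ : ∀ i ∈ s, |θ i| ≤ M) (m : ℕ)
    (u : ℝ) : |expMoment s c θ γ m u| ≤ M ^ m * expMoment s c θ γ 0 u := by
  rw [expMoment, expMoment, mul_sum]
  refine (abs_sum_le_sum_abs _ _).trans (sum_le_sum fun i hi => ?_)
  rw [abs_mul, abs_mul, abs_of_nonneg (hc i hi), abs_of_pos (exp_pos _), abs_pow, pow_zero,
    mul_one]
  calc c i * |θ i| ^ m * exp (θ i * u + γ i) = c i * exp (θ i * u + γ i) * |θ i| ^ m := by ring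
    _ ≤ c i * exp (θ i * u + γ i) * M ^ m :=
      mul_le_mul_of_nonneg_left (pow_le_pow_left₀ (abs_nonneg _) (hθ i hi) m)
        (mul_nonneg (hc i hi) (exp_pos _).le)
    _ = M ^ m * (c i * exp (θ i * u + γ i)) := by ring

lemma iteratedDeriv_two_log_expMoment (hpos : ∀ u, 0 < expMoment s c θ γ 0 u) (x : ℝ) :
    iteratedDeriv 2 (fun u => log (expMoment s c θ γ 0 u)) x =
      (expMoment s c θ γ 2 x * expMoment s c θ γ 0 x - expMoment s c θ γ 1 x ^ 2) /
        expMoment s c θ γ 0 x ^ 2 := by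
  have hderiv : deriv (fun u => log (expMoment s c θ γ 0 u)) =
      fun u => expMoment s c θ γ 1 u / expMoment s c θ γ 0 u :=
    funext fun u => ((hasDerivAt_expMoment s c θ γ 0 u).log (hpos u).ne').deriv
  rw [iteratedDeriv_succ, iteratedDeriv_one, hderiv,
    ((hasDerivAt_expMoment s c θ γ 1 x).fun_div (hasDerivAt_expMoment s c θ γ 0 x)
      (hpos x).ne').deriv]
  ring

theorem abs_iteratedDeriv_two_log_sum_exp_le {M : ℝ} (hc : ∀ i ∈ s, 0 ≤ c i)
    (hpos : ∃ i ∈ s, 0 < c i) (hθ : ∀ i ∈ s, |θ i| ≤ M) (x : ℝ) :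
    |iteratedDeriv 2 (fun u => log (∑ i ∈ s, c i * exp (θ i * u + γ i))) x| ≤ M ^ 2 := by
  have hlog : (fun u => log (∑ i ∈ s, c i * exp (θ i * u + γ i))) =
      fun u => log (expMoment s c θ γ 0 u) := by
    simp only [expMoment, pow_zero, mul_one]
  have hG₀ := expMoment_zero_pos (θ := θ) (γ := γ) hc hpos x
  have hG₁ := abs_expMoment_le (γ := γ) hc hθ 1 x
  have hG₂ := abs_expMoment_le (γ := γ) hc hθ 2 x
  rw [hlog, iteratedDeriv_two_log_expMoment (expMoment_zero_pos hc hpos), abs_div, abs_pow,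
    abs_of_pos hG₀, div_le_iff₀ (by positivity)]
  refine abs_sub_le_of_nonneg_of_le (mul_nonneg (expMoment_two_nonneg hc x) hG₀.le) ?_
    (sq_nonneg _) ?_
  · nlinarith [le_abs_self (expMoment s c θ γ 2 x)]
  · rw [pow_one] at hG₁
    nlinarith [sq_abs (expMoment s c θ γ 1 x), abs_nonneg (expMoment s c θ γ 1 x)]

end ExpSum

lemma kpTau_eq_sum_exp (k n : ℕ) (κ : Fin n → ℝ) (A : Matrix (Fin k) (Fin n) ℝ) (x y t : ℝ) :
    kpTau k n κ A x y t = ∑ I ∈ powersetCard k univ, kpMinor k n A I * kpVdm k n κ I *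
      exp ((∑ i ∈ I, κ i) * x + ∑ i ∈ I, (κ i ^ 2 * y + κ i ^ 3 * t)) := by
  simp only [kpTau, sum_mul, ← sum_add_distrib, add_assoc]

theorem kpU_bounded_general (k n : ℕ)
    (κ : Fin n → ℝ) (hκ : StrictMono κ)
    (A : Matrix (Fin k) (Fin n) ℝ) (hrank : A.rank = k) (hA : TotallyNonneg k n A) :
    ∃ C : ℝ, ∀ x y t : ℝ, |kpU k n κ A x y t| ≤ C := by
  obtain ⟨I₀, hI₀, hminor⟩ := exists_kpMinor_ne_zero_of_rank_eq hrank
  have hc : ∀ I ∈ powersetCard k univ, 0 ≤ kpMinor k n A I * kpVdm k n κ I := fun I hI =>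
    mul_nonneg (hA I (mem_powersetCard_univ.1 hI)) (kpVdm_pos hκ (mem_powersetCard_univ.1 hI)).le
  have hpos : ∃ I ∈ powersetCard k univ, 0 < kpMinor k n A I * kpVdm k n κ I :=
    ⟨I₀, mem_powersetCard_univ.2 hI₀, mul_pos ((hA I₀ hI₀).lt_of_ne' hminor) (kpVdm_pos hκ hI₀)⟩
  have hθ : ∀ I ∈ powersetCard k univ, |∑ i ∈ I, κ i| ≤ ∑ i, |κ i| := fun I _ =>
    (abs_sum_le_sum_abs _ _).trans
      (sum_le_sum_of_subset_of_nonneg (subset_univ I) fun i _ _ => abs_nonneg _)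
  refine ⟨2 * (∑ i, |κ i|) ^ 2, fun x y t => ?_⟩
  simp only [kpU, kpTau_eq_sum_exp, abs_mul, abs_two]
  gcongr
  exact abs_iteratedDeriv_two_log_sum_exp_le hc hpos hθ x

/-- for `0 < k < n`, strictly increasing phases, and a totally nonnegative
`k × n` matrix of rank `k`, the multiline-soliton function `u = 2 ∂_x² log τ` is bounded
on `ℝ³`. -/
theorem kpU_bounded (k n : ℕ) (hk : 0 < k) (hkn : k < n)
    (κ : Fin n → ℝ) (hκ : StrictMono κ)
    (A : Matrix (Fin k) (Fin n) ℝ) (hrank : A.rank = k) (hA : TotallyNonneg k n A) :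
    ∃ C : ℝ, ∀ x y t : ℝ, |kpU k n κ A x y t| ≤ C :=
  kpU_bounded_general k n κ hκ A hrank hA
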